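/- arXiv:2102.07893 — 6 statements merged into one kernel-verified Lean document; each statement's English description precedes it below -/
import Mathlib

section
/- Let G be a finite group generated by elements x and y. If the order of x is 3 and the order of y is at least 4, then the Cayley digraph Cay(G,{x,y}) is an oriented regular representation of G, unless the order of y is 6, x = y⁴, and G is cyclic of order 6. -/
/-- `σ` is an automorphism of the Cayley digraph `Cay(G,S)`:
a permutation of `G` such that `(u,v)` is an arc iff `(σ u, σ v)` is an arc,
where `(u,v)` is an arc iff `v * u⁻¹ ∈ S`. -/
def IsCayleyDigraphAut {G : Type*} [Group G] (S : Set G) (σ : Equiv.Perm G) : Prop :=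
  ∀ u v : G, v * u⁻¹ ∈ S ↔ σ v * (σ u)⁻¹ ∈ S

/-- `Cay(G,S)` is a digraphical regular representation: every automorphism of the
Cayley digraph is right multiplication by an element of `G`. -/
def IsDRR {G : Type*} [Group G] (S : Set G) : Prop :=
  ∀ σ : Equiv.Perm G, IsCayleyDigraphAut S σ → ∃ g : G, ∀ u : G, σ u = u * g

/-- `Cay(G,S)` is an oriented regular representation: a proper DRR. -/
def IsORR {G : Type*} [Group G] (S : Set G) : Prop :=
  S ∩ S⁻¹ = ∅ ∧ IsDRR S

/-! Automorphisms of a Cayley digraph map directed triangles to directed triangles. As `x³ = 1`,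
every `x`-arc lies on one, while outside the exceptional case no relation `a * b * y = 1` with
`a, b ∈ {x, y}` holds, so no `y`-arc does. Hence an automorphism preserves arc labels, i.e. commutes
with left multiplication by `x` and `y`, hence by all of `G = ⟨x, y⟩`, so it is right
multiplication by the image of `1`. -/

section

variable {G : Type*} [Group G]

/-- `s` labels arcs on directed triangles `u → s * u → b * s * u → u` of `Cay(G,S)`. -/
def IsTriangleLabel (S : Set G) (s : G) : Prop :=
  ∃ a ∈ S, ∃ b ∈ S, a * b * s = 1

theorem isTriangleLabel_mul_inv_iff {S : Set G} (u v : G) :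
    IsTriangleLabel S (v * u⁻¹) ↔ ∃ w, w * v⁻¹ ∈ S ∧ u * w⁻¹ ∈ S := by
  constructor
  · rintro ⟨a, ha, b, hb, h⟩
    refine ⟨b * v, by simpa using hb, ?_⟩
    have : a = u * (b * v)⁻¹ := by
      rw [← mul_inv_eq_one, mul_inv_rev, inv_inv]
      simpa only [mul_assoc] using h
    exact this ▸ ha
  · rintro ⟨w, hw, hw'⟩
    exact ⟨_, hw', _, hw, by group⟩

theorem IsCayleyDigraphAut.isTriangleLabel_iff {S : Set G} {σ : Equiv.Perm G}
    (hσ : IsCayleyDigraphAut S σ) (u v : G) :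
    IsTriangleLabel S (σ v * (σ u)⁻¹) ↔ IsTriangleLabel S (v * u⁻¹) := by
  rw [isTriangleLabel_mul_inv_iff, isTriangleLabel_mul_inv_iff, σ.symm.exists_congr_left]
  exact exists_congr fun w => by rw [Equiv.symm_symm, ← hσ, ← hσ]

theorem IsCayleyDigraphAut.apply_mul {S : Set G} {σ : Equiv.Perm G}
    (hσ : IsCayleyDigraphAut S σ) (hS : S.InjOn (IsTriangleLabel S)) {s : G} (hs : s ∈ S)
    (u : G) : σ (s * u) = s * σ u := by
  have hmem : σ (s * u) * (σ u)⁻¹ ∈ S := (hσ u (s * u)).1 (by simpa using hs)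
  have hlabel := hσ.isTriangleLabel_iff u (s * u)
  rw [mul_inv_cancel_right] at hlabel
  exact mul_inv_eq_iff_eq_mul.1 (hS hmem hs (propext hlabel))

theorem Equiv.Perm.apply_eq_mul_apply_one {T : Set G} (hT : Subgroup.closure T = ⊤)
    (σ : Equiv.Perm G) (hσ : ∀ t ∈ T, ∀ v, σ (t * v) = t * σ v) (u : G) : σ u = u * σ 1 := by
  have key : ∀ g ∈ Subgroup.closure T, ∀ v, σ (g * v) = g * σ v := by
    intro g hg
    induction hg using Subgroup.closure_induction with
    | mem t ht => exact hσ t ht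
    | one => simp
    | mul a b _ _ ha hb => intro v; rw [mul_assoc, ha, hb, mul_assoc]
    | inv a _ ha =>
      intro v
      rw [eq_inv_mul_iff_mul_eq, ← ha, mul_inv_cancel_left]
  simpa using key u (hT ▸ Subgroup.mem_top u) 1

theorem isDRR_of_injOn_isTriangleLabel {S : Set G} (hgen : Subgroup.closure S = ⊤)
    (hS : S.InjOn (IsTriangleLabel S)) : IsDRR S := fun σ hσ =>
  ⟨σ 1, σ.apply_eq_mul_apply_one hgen fun _ hs => hσ.apply_mul hS hs⟩

theorem pair_inter_inv_eq_empty {a b : G} (ha : 2 < orderOf a) (hb : 2 < orderOf b)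
    (hab : orderOf a ≠ orderOf b) : ({a, b} : Set G) ∩ {a, b}⁻¹ = ∅ := by
  have hinv : ∀ g : G, 2 < orderOf g → g⁻¹ ≠ g := fun g hg h =>
    (orderOf_le_of_pow_eq_one two_pos (by rw [sq, ← inv_eq_iff_mul_eq_one, h])).not_gt hg
  rw [Set.eq_empty_iff_forall_notMem]
  rintro g ⟨rfl | rfl, h | h⟩
  · exact hinv g ha h
  · exact hab (by rw [← h, orderOf_inv])
  · exact hab (by rw [← h, orderOf_inv])
  · exact hinv g hb h

theorem exceptional_of_eq_inv_sq {x y : G} (hgen : Subgroup.closure {x, y} = ⊤)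
    (hx : orderOf x = 3) (hy : 4 ≤ orderOf y) (hxy : x = (y ^ 2)⁻¹) :
    orderOf y = 6 ∧ x = y ^ 4 ∧ IsCyclic G ∧ Nat.card G = 6 := by
  have hy6 : y ^ 6 = 1 := by
    have := pow_orderOf_eq_one x
    rwa [hx, hxy, inv_pow, inv_eq_one, ← pow_mul] at this
  have hord : orderOf y = 6 := by
    have hdvd := orderOf_dvd_of_pow_eq_one hy6
    have := Nat.le_of_dvd (by norm_num) hdvd
    interval_cases h : orderOf y <;> simp_all
  have hx4 : x = y ^ 4 := by
    rw [hxy, inv_eq_iff_mul_eq_one, ← pow_add, hy6]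
  have htop : Subgroup.zpowers y = ⊤ := by
    refine eq_top_iff.2 (hgen ▸ (Subgroup.closure_le _).2 ?_)
    rintro g (rfl | rfl)
    · exact hx4 ▸ Subgroup.pow_mem _ (Subgroup.mem_zpowers y) 4
    · exact Subgroup.mem_zpowers g
  exact ⟨hord, hx4, isCyclic_iff_exists_zpowers_eq_top.2 ⟨y, htop⟩,
    hord ▸ (orderOf_eq_card_of_zpowers_eq_top htop).symm⟩

theorem isTriangleLabel_of_pow_three_eq_one {S : Set G} {x : G} (hx : x ∈ S) (h : x ^ 3 = 1) :
    IsTriangleLabel S x :=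
  ⟨x, hx, x, hx, by rwa [← pow_three']⟩

theorem not_isTriangleLabel_pair_right {x y : G} (hgen : Subgroup.closure {x, y} = ⊤)
    (hx : orderOf x = 3) (hy : 4 ≤ orderOf y)
    (hexc : ¬ (orderOf y = 6 ∧ x = y ^ 4 ∧ IsCyclic G ∧ Nat.card G = 6)) :
    ¬ IsTriangleLabel {x, y} y := by
  have hx3 : x ^ 3 = 1 := hx ▸ pow_orderOf_eq_one x
  have hnot_exc : x ≠ (y ^ 2)⁻¹ := fun h => hexc (exceptional_of_eq_inv_sq hgen hx hy h)
  rintro ⟨a, ha, b, hb, h⟩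
  simp only [Set.mem_insert_iff, Set.mem_singleton_iff] at ha hb
  rcases ha with ha | ha <;> rcases hb with hb | hb <;> rw [ha, hb] at h
  · have : y = x := mul_left_cancel (h.trans (hx3 ▸ pow_three' x))
    rw [this, hx] at hy
    omega
  · exact hnot_exc (eq_inv_of_mul_eq_one_left (by rwa [sq, ← mul_assoc]))
  · refine hnot_exc (eq_inv_of_mul_eq_one_left ?_)
    have hconj : x * y ^ 2 = y⁻¹ * (y * x * y) * y := by
      simp only [sq, mul_assoc, inv_mul_cancel_left]
    rw [hconj, h, mul_one, inv_mul_cancel]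
  · have := orderOf_le_of_pow_eq_one three_pos (by rwa [pow_three'] : y ^ 3 = 1)
    omega

end

theorem stmt_3_general (G : Type*) [Group G] (x y : G)
    (hgen : Subgroup.closure {x, y} = ⊤)
    (hx : orderOf x = 3) (hy : 4 ≤ orderOf y)
    (hexc : ¬ (orderOf y = 6 ∧ x = y ^ 4 ∧ IsCyclic G ∧ Nat.card G = 6)) :
    IsORR ({x, y} : Set G) := by
  have hx_label : IsTriangleLabel {x, y} x :=
    isTriangleLabel_of_pow_three_eq_one (by simp) (hx ▸ pow_orderOf_eq_one x)
  have hy_label := not_isTriangleLabel_pair_right hgen hx hy hexc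
  refine ⟨pair_inter_inv_eq_empty (by omega) (by omega) (by omega),
    isDRR_of_injOn_isTriangleLabel hgen ?_⟩
  exact Set.injOn_pair.2 fun h => absurd (h ▸ hx_label) hy_label

theorem stmt_3 (G : Type*) [Group G] [Finite G] (x y : G)
    (hgen : Subgroup.closure {x, y} = ⊤)
    (hx : orderOf x = 3) (hy : 4 ≤ orderOf y)
    (hexc : ¬ (orderOf y = 6 ∧ x = y ^ 4 ∧ IsCyclic G ∧ Nat.card G = 6)) :
    IsORR ({x, y} : Set G) :=
  stmt_3_general G x y hgen hx hy hexc
end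

section
/- Let G be a finite group generated by elements x and y. If the order of x is 4, the order of y is at least 5, and the order of x·y is at least 3, then the Cayley digraph Cay(G,{x,y}) is an oriented regular representation of G, unless the order of y is 12, x = y⁹, and G is cyclic of order 12. -/
section

variable {G : Type*} [Group G]

theorem map_eq_mul_map_one_of_closure_eq_top {S : Set G} (hS : Subgroup.closure S = ⊤)
    {f : G → G} (hf : ∀ s ∈ S, ∀ u, f (s * u) = s * f u) (u : G) : f u = u * f 1 := by
  have key : ∀ g ∈ Subgroup.closure S, ∀ v, f (g * v) = g * f v := by
    intro g hg
    induction hg using Subgroup.closure_induction with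
    | mem s hs => exact hf s hs
    | one => simp
    | mul a b _ _ iha ihb => intro v; rw [mul_assoc, iha, ihb, mul_assoc]
    | inv a _ iha => intro v; rw [eq_inv_mul_iff_mul_eq, ← iha, mul_inv_cancel_left]
  simpa using key u (hS ▸ Subgroup.mem_top u) 1

theorem pair_inter_inv_eq_empty_s4 {x y : G} (hx : x ^ 2 ≠ 1) (hy : y ^ 2 ≠ 1) (hxy : x * y ≠ 1) :
    ({x, y} : Set G) ∩ ({x, y} : Set G)⁻¹ = ∅ := by
  ext g
  simp only [Set.inv_insert, Set.inv_singleton, Set.mem_inter_iff, Set.mem_insert_iff,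
    Set.mem_singleton_iff, Set.mem_empty_iff_false, iff_false, not_and]
  rintro (rfl | rfl) (h | h) <;> rw [eq_inv_iff_mul_eq_one] at h
  · exact hx (sq g ▸ h)
  · exact hxy h
  · exact hxy (mul_eq_one_comm.1 h)
  · exact hy (sq g ▸ h)

namespace IsCayleyDigraphAut

variable {S : Set G} {σ : Equiv.Perm G}

theorem map_mul_mul_inv_mem (hσ : IsCayleyDigraphAut S σ) {s : G} (hs : s ∈ S) (u : G) :
    σ (s * u) * (σ u)⁻¹ ∈ S :=
  (hσ u (s * u)).1 (by simpa using hs)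

theorem map_mul_of_closed_walks (hσ : IsCayleyDigraphAut S σ) {x : G} (hxS : x ∈ S)
    (hx : x ^ 4 = 1) (hwalk : ∀ a ∈ S, ∀ b ∈ S, ∀ c ∈ S, ∀ d ∈ S, a * b * c * d = 1 → d = x)
    (u : G) : σ (x * u) = x * σ u := by
  set u₁ := x * u
  set u₂ := x * u₁
  set u₃ := x * u₂
  have hcycle : x * u₃ = u :=
    calc x * u₃ = x ^ 4 * u := by simp only [u₃, u₂, u₁, pow_succ, pow_zero, one_mul, mul_assoc]
      _ = u := by rw [hx, one_mul]
  have hlast := hσ.map_mul_mul_inv_mem hxS u₃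
  rw [hcycle] at hlast
  have hclosed :
      (σ u * (σ u₃)⁻¹) * (σ u₃ * (σ u₂)⁻¹) * (σ u₂ * (σ u₁)⁻¹) * (σ u₁ * (σ u)⁻¹) = 1 := by
    group
  have := hwalk _ hlast _ (hσ.map_mul_mul_inv_mem hxS u₂) _ (hσ.map_mul_mul_inv_mem hxS u₁) _
    (hσ.map_mul_mul_inv_mem hxS u) hclosed
  exact mul_inv_eq_iff_eq_mul.1 this

theorem map_mul_of_map_mul_of_pair {x y : G} (hσ : IsCayleyDigraphAut {x, y} σ) (hne : y ≠ x)
    (hσx : ∀ u, σ (x * u) = x * σ u) (u : G) : σ (y * u) = y * σ u := by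
  have h := hσ.map_mul_mul_inv_mem (Set.mem_insert_of_mem x rfl) u
  simp only [Set.mem_insert_iff, Set.mem_singleton_iff, mul_inv_eq_iff_eq_mul] at h
  rcases h with h | h
  · rw [← hσx] at h
    exact absurd (mul_right_cancel (σ.injective h)) hne
  · exact h

end IsCayleyDigraphAut

theorem orderOf_eq_four_or_twelve_of_orderOf_pow_three {y : G} (h : orderOf (y ^ 3) = 4) :
    orderOf y = 4 ∨ orderOf y = 12 := by
  rw [orderOf_pow' y (by norm_num)] at h
  have h3 : Nat.gcd (orderOf y) 3 ∣ orderOf y := Nat.gcd_dvd_left _ _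
  rcases (Nat.dvd_prime Nat.prime_three).1 (Nat.gcd_dvd_right (orderOf y) 3) with h1 | h1 <;>
    rw [h1] at h h3 <;> omega

theorem mul_pow_three_ne_one {x y : G} (hgen : Subgroup.closure {x, y} = ⊤)
    (hx : orderOf x = 4) (hy : 5 ≤ orderOf y)
    (hexc : ¬ (orderOf y = 12 ∧ x = y ^ 9 ∧ IsCyclic G ∧ Nat.card G = 12)) :
    x * y ^ 3 ≠ 1 := by
  intro h
  have hx' : x = (y ^ 3)⁻¹ := eq_inv_of_mul_eq_one_left h
  have hy12 : orderOf y = 12 := by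
    have := orderOf_eq_four_or_twelve_of_orderOf_pow_three (y := y)
      (by rw [← orderOf_inv, ← hx', hx])
    omega
  have hx9 : x = y ^ 9 := by
    rw [hx', inv_eq_iff_mul_eq_one, ← pow_add]
    simpa only [hy12] using pow_orderOf_eq_one y
  have hzp : Subgroup.zpowers y = ⊤ := by
    rw [eq_top_iff, ← hgen, Subgroup.closure_le, Set.insert_subset_iff, Set.singleton_subset_iff,
      hx9]
    exact ⟨pow_mem (Subgroup.mem_zpowers y) 9, Subgroup.mem_zpowers y⟩
  refine hexc ⟨hy12, hx9, isCyclic_iff_exists_zpowers_eq_top.2 ⟨y, hzp⟩, ?_⟩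
  rw [← Subgroup.card_top, ← hzp, Nat.card_zpowers, hy12]

theorem eq_of_mul_mul_mul_eq_one {x y : G} (hx : orderOf x = 4) (hy : 5 ≤ orderOf y)
    (hxy : 3 ≤ orderOf (x * y)) (hxy3 : x * y ^ 3 ≠ 1) {a b c d : G}
    (ha : a ∈ ({x, y} : Set G)) (hb : b ∈ ({x, y} : Set G)) (hc : c ∈ ({x, y} : Set G))
    (hd : d ∈ ({x, y} : Set G)) (h : a * b * c * d = 1) : d = x := by
  have hx4 : x * x * x * x = 1 := by
    simpa only [hx, pow_succ, pow_zero, one_mul] using pow_orderOf_eq_one x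
  have hy4 : y * y * y * y ≠ 1 := by
    simpa only [pow_succ, pow_zero, one_mul] using pow_ne_one_of_lt_orderOf (x := y) (n := 4)
      (by norm_num) (by omega)
  have hxxxy : x * x * x * y ≠ 1 := fun h' => by
    have hyx : y = x := (eq_inv_of_mul_eq_one_right h').trans (eq_inv_of_mul_eq_one_right hx4).symm
    rw [hyx, hx] at hy
    omega
  have hxxyy : x * x * y * y ≠ 1 := fun h' => hy4 <| by
    have hyy : y * y = (x * x)⁻¹ := eq_inv_of_mul_eq_one_right (by rw [← h']; group)
    calc y * y * y * y = (y * y) * (y * y) := by group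
      _ = (x * x * x * x)⁻¹ := by rw [hyy]; group
      _ = 1 := by rw [hx4, inv_one]
  have hxyxy : x * y * x * y ≠ 1 := by
    simpa only [sq, mul_assoc] using pow_ne_one_of_lt_orderOf (x := x * y) (n := 2)
      (by norm_num) (by omega)
  have hxyyy : x * y * y * y ≠ 1 := by
    simpa only [pow_succ, pow_zero, one_mul, mul_assoc] using hxy3
  have rotate : ∀ a b c d : G, a * b * c * d = 1 → b * c * d * a = 1 := fun a b c d h' => by
    rw [show b * c * d * a = a⁻¹ * (a * b * c * d) * a by group, h']
    group
  rcases hd with rfl | rfl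
  · rfl
  exfalso
  -- every word `a b c y` has a rotation among the five words excluded above
  have h₁ := rotate _ _ _ _ h
  have h₂ := rotate _ _ _ _ h₁
  have h₃ := rotate _ _ _ _ h₂
  rcases ha with rfl | rfl <;> rcases hb with rfl | rfl <;> rcases hc with rfl | rfl <;>
    first
    | exact hxxxy ‹_› | exact hxxyy ‹_› | exact hxyxy ‹_› | exact hxyyy ‹_› | exact hy4 ‹_›

end

theorem stmt_4_general (G : Type*) [Group G] (x y : G)
    (hgen : Subgroup.closure {x, y} = ⊤)
    (hx : orderOf x = 4) (hy : 5 ≤ orderOf y) (hxy : 3 ≤ orderOf (x * y))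
    (hexc : ¬ (orderOf y = 12 ∧ x = y ^ 9 ∧ IsCyclic G ∧ Nat.card G = 12)) :
    IsORR ({x, y} : Set G) := by
  have hyx : y ≠ x := fun h => by rw [h, hx] at hy; omega
  have hxy1 : x * y ≠ 1 := fun h => by rw [h, orderOf_one] at hxy; omega
  refine ⟨pair_inter_inv_eq_empty_s4 (pow_ne_one_of_lt_orderOf two_ne_zero (by omega))
    (pow_ne_one_of_lt_orderOf two_ne_zero (by omega)) hxy1,
    fun σ hσ => ⟨σ 1, map_eq_mul_map_one_of_closure_eq_top hgen ?_⟩⟩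
  have hσx : ∀ u, σ (x * u) = x * σ u :=
    hσ.map_mul_of_closed_walks (Set.mem_insert x _) (hx ▸ pow_orderOf_eq_one x)
      fun _ ha _ hb _ hc _ hd =>
        eq_of_mul_mul_mul_eq_one hx hy hxy (mul_pow_three_ne_one hgen hx hy hexc) ha hb hc hd
  rintro s (rfl | rfl)
  · exact hσx
  · exact hσ.map_mul_of_map_mul_of_pair hyx hσx

theorem stmt_4 (G : Type*) [Group G] [Finite G] (x y : G)
    (hgen : Subgroup.closure {x, y} = ⊤)
    (hx : orderOf x = 4) (hy : 5 ≤ orderOf y) (hxy : 3 ≤ orderOf (x * y))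
    (hexc : ¬ (orderOf y = 12 ∧ x = y ^ 9 ∧ IsCyclic G ∧ Nat.card G = 12)) :
    IsORR ({x, y} : Set G) :=
  stmt_4_general G x y hgen hx hy hxy hexc
end

section
/- Let p ≥ 5 be a prime and let x, y be nonzero elements of the additive group ℤ/pℤ with x ≠ y and x ≠ −y. Then the Cayley digraph Cay(ℤ/pℤ, {x,y}) (with respect to the additive group structure) is an oriented regular representation of ℤ/pℤ. -/
/-!
Let `σ` be an automorphism of `Cay(G, {x, y})` and `u ∈ G`. The out-neighbours `u + x`, `u + y`
of `u` are sent to the two out-neighbours `σ u + x`, `σ u + y` of `σ u`, and their only common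
out-neighbour `u + (x + y)` is sent to a common out-neighbour of those. When `2x ≠ 2y` the only
one is `σ u + (x + y)`, so `σ` commutes with translation by `x + y`; if `x + y` generates `G`,
`σ` is a translation. In `ℤ/pℤ` with `p` odd, `x ≠ ±y` gives both conditions, and `x, y ≠ 0`
together with `x ≠ -y` make `{x, y}` disjoint from `{-x, -y}`.
-/

/-- `σ` is an automorphism of the Cayley digraph `Cay(G,S)` of an additive group:
a permutation of `G` such that `(u,v)` is an arc iff `(σ u, σ v)` is an arc,
where `(u,v)` is an arc iff `v - u ∈ S`. -/
def IsAddCayleyDigraphAut {G : Type*} [AddGroup G] (S : Set G) (σ : Equiv.Perm G) : Prop :=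
  ∀ u v : G, v - u ∈ S ↔ σ v - σ u ∈ S

/-- `Cay(G,S)` is a digraphical regular representation: every automorphism of the
Cayley digraph is (right) translation by an element of `G`. -/
def IsAddDRR {G : Type*} [AddGroup G] (S : Set G) : Prop :=
  ∀ σ : Equiv.Perm G, IsAddCayleyDigraphAut S σ → ∃ g : G, ∀ u : G, σ u = u + g

/-- `Cay(G,S)` is an oriented regular representation: a proper DRR. -/
def IsAddORR {G : Type*} [AddGroup G] (S : Set G) : Prop :=
  S ∩ (-S) = ∅ ∧ IsAddDRR S

section Pair

variable {G : Type*} [AddCommGroup G] {x y : G}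

theorem ne_of_add_self_ne (hxy : x + x ≠ y + y) : x ≠ y := fun h => hxy (h ▸ rfl)

theorem pair_inter_neg_pair_eq_empty (hx : x + x ≠ 0) (hy : y + y ≠ 0) (hxy : x + y ≠ 0) :
    ({x, y} : Set G) ∩ -{x, y} = ∅ := by
  rw [Set.eq_empty_iff_forall_notMem]
  rintro s ⟨hs, hs'⟩
  simp only [Set.mem_neg, Set.mem_insert_iff, Set.mem_singleton_iff] at hs hs'
  rcases hs with rfl | rfl <;> rcases hs' with h | h
  · exact hx (neg_eq_iff_add_eq_zero.1 h)
  · exact hxy (neg_eq_iff_add_eq_zero.1 h)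
  · exact hxy (by rw [add_comm]; exact neg_eq_iff_add_eq_zero.1 h)
  · exact hy (neg_eq_iff_add_eq_zero.1 h)

theorem eq_add_add_of_sub_mem_pair (hxy : x + x ≠ y + y) {c w : G}
    (hwx : w - (c + x) ∈ ({x, y} : Set G)) (hwy : w - (c + y) ∈ ({x, y} : Set G)) :
    w = c + (x + y) := by
  simp only [Set.mem_insert_iff, Set.mem_singleton_iff, sub_eq_iff_eq_add] at hwx hwy
  rcases hwx with hwx | hwx
  · rcases hwy with hwy | hwy
    · exact absurd (add_left_cancel (add_left_cancel (hwx.symm.trans hwy))) (ne_of_add_self_ne hxy)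
    · refine absurd (add_left_cancel (a := c) ?_) hxy
      rw [show c + (x + x) = x + (c + x) by abel, ← hwx, hwy]; abel
  · rw [hwx]; abel

theorem eq_add_add_of_common_out_neighbour (hxy : x + x ≠ y + y) {a b c w : G}
    (ha : a - c ∈ ({x, y} : Set G)) (hb : b - c ∈ ({x, y} : Set G)) (hab : a ≠ b)
    (hwa : w - a ∈ ({x, y} : Set G)) (hwb : w - b ∈ ({x, y} : Set G)) :
    w = c + (x + y) := by
  simp only [Set.mem_insert_iff, Set.mem_singleton_iff, sub_eq_iff_eq_add'] at ha hb
  rcases ha with rfl | rfl <;> rcases hb with rfl | rfl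
  · exact absurd rfl hab
  · exact eq_add_add_of_sub_mem_pair hxy hwa hwb
  · exact eq_add_add_of_sub_mem_pair hxy hwb hwa
  · exact absurd rfl hab

theorem IsAddCayleyDigraphAut.map_add_add {σ : Equiv.Perm G}
    (hσ : IsAddCayleyDigraphAut {x, y} σ) (hxy : x + x ≠ y + y) (u : G) :
    σ (u + (x + y)) = σ u + (x + y) := by
  have arc {v w : G} (h : w - v ∈ ({x, y} : Set G)) : σ w - σ v ∈ ({x, y} : Set G) :=
    (hσ v w).1 h
  refine eq_add_add_of_common_out_neighbour hxy (a := σ (u + x)) (b := σ (u + y))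
    (arc (by simp)) (arc (by simp)) ?_ (arc (by simp)) (arc (by simp [add_left_comm u x y]))
  exact fun h => ne_of_add_self_ne hxy (add_left_cancel (σ.injective h))

end Pair

theorem map_eq_add_map_zero_of_map_add {G : Type*} [AddCommGroup G] {g : G}
    (hg : AddSubgroup.zmultiples g = ⊤) {f : G → G} (hf : ∀ u, f (u + g) = f u + g) (u : G) :
    f u = u + f 0 := by
  have hper : Function.Periodic (fun v => f v - v) g := fun v => by
    simp only [hf]; abel
  obtain ⟨n, rfl⟩ := AddSubgroup.mem_zmultiples_iff.1 (hg ▸ AddSubgroup.mem_top u)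
  have := hper.zsmul_eq n
  simp only [sub_zero] at this
  rw [← this]; abel

theorem isAddORR_pair {G : Type*} [AddCommGroup G] {x y : G} (hx : x + x ≠ 0) (hy : y + y ≠ 0)
    (hxy : x + x ≠ y + y) (hxy' : x + y ≠ 0) (hgen : AddSubgroup.zmultiples (x + y) = ⊤) :
    IsAddORR ({x, y} : Set G) :=
  ⟨pair_inter_neg_pair_eq_empty hx hy hxy', fun σ hσ =>
    ⟨σ 0, map_eq_add_map_zero_of_map_add hgen (hσ.map_add_add hxy)⟩⟩

theorem add_self_injective_of_ringChar_ne_two {R : Type*} [Ring R] [NoZeroDivisors R]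
    [Nontrivial R] (hR : ringChar R ≠ 2) : Function.Injective (fun a : R => a + a) := by
  simpa only [← two_mul] using mul_right_injective₀ (Ring.two_ne_zero hR)

theorem stmt_5 (p : ℕ) (hp : p.Prime) (hp5 : 5 ≤ p) (x y : ZMod p)
    (hx : x ≠ 0) (hy : y ≠ 0) (hxy : x ≠ y) (hxy' : x ≠ -y) :
    IsAddORR ({x, y} : Set (ZMod p)) := by
  have := Fact.mk hp
  have hdouble : Function.Injective (fun a : ZMod p => a + a) :=
    add_self_injective_of_ringChar_ne_two (by rw [ZMod.ringChar_zmod_n]; omega)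
  have hsum : x + y ≠ 0 := fun h => hxy' (eq_neg_of_add_eq_zero_left h)
  exact isAddORR_pair (fun h => hx (hdouble (h.trans (add_zero 0).symm)))
    (fun h => hy (hdouble (h.trans (add_zero 0).symm))) (fun h => hxy (hdouble h)) hsum
    (zmultiples_eq_top_of_prime_card (Nat.card_zmod p) hsum)
end

section
/- Let G be a group generated by two elements x and z such that the order of x is at most 3, the order of z is at most 3, and the order of x·z is at most 3. Then G is solvable. -/
/-!
Up to permuting the roles of `x`, `z` and `(x * z)⁻¹` (the moves `(x, z) ↦ (z, x)` and
`(x, z) ↦ (x * z, z⁻¹)` preserve the hypotheses), `G` is a quotient of one of the triangle groups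
`Δ(2, n, 2)`, `Δ(2, 3, 3)` or `Δ(3, 3, 3)`. Each of these has an abelian normal subgroup with cyclic
quotient: `⟨z⟩` (dihedral case), the Klein four-group `⟨x, z x z⁻¹⟩` (the `A₄` case), and
`⟨x⁻¹ z, z x⁻¹⟩` (the translation lattice of the Euclidean `(3, 3, 3)` group). Normality only has
to be checked under conjugation by one generator, the remaining one already lying in the subgroup
or in its coset.
-/

open Subgroup

section

variable {G : Type*} [Group G]

theorem Group.isSolvable_of_isMulCommutative [IsMulCommutative G] : Group.IsSolvable G :=
  Group.isSolvable_of_comm mul_comm'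

theorem mem_normalizer_closure_of_isOfFinOrder {s : Set G} {g : G} (hg : IsOfFinOrder g)
    (h : ∀ a ∈ s, g * a * g⁻¹ ∈ closure s) : g ∈ normalizer (closure s : Set G) := by
  have hconj : closure s ≤ (closure s).comap (MulAut.conj g).toMonoidHom := (closure_le _).mpr h
  have hpow : ∀ n : ℕ, ∀ b ∈ closure s, g ^ n * b * (g ^ n)⁻¹ ∈ closure s := by
    intro n
    induction n with
    | zero => simp
    | succ n ih => exact fun b hb ↦ by simpa [pow_succ', mul_assoc] using hconj (ih b hb)
  rw [← zpowers_le, le_normalizer_closure_iff]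
  intro k hk a ha
  -- `g` has finite order, so `g⁻¹` is a positive power of `g`.
  obtain ⟨n, rfl⟩ := hg.mem_powers_iff_mem_zpowers.mpr hk
  exact hpow n a (subset_closure ha)

theorem isSolvable_of_closure_insert_eq_top {x : G} {s : Set G} (hgen : closure (insert x s) = ⊤)
    (hs : ∀ a ∈ s, ∀ b ∈ s, a * b = b * a) (hx : x ∈ normalizer (closure s : Set G)) :
    Group.IsSolvable G := by
  have : (closure s).Normal := normalizer_eq_top_iff.mp <| eq_top_iff.mpr <| hgen ▸
    (closure_le _).mpr (Set.insert_subset hx (subset_closure.trans le_normalizer))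
  have : IsMulCommutative (closure s) := isMulCommutative_closure hs
  have : IsCyclic (G ⧸ closure s) := by
    have hle : closure (insert x s) ≤ (zpowers (x : G ⧸ closure s)).comap (QuotientGroup.mk' _) :=
      (closure_le _).mpr <| Set.insert_subset (mem_zpowers _) fun a ha ↦ by
        simp [(QuotientGroup.eq_one_iff a).mpr (subset_closure ha)]
    refine ⟨x, fun q ↦ ?_⟩
    induction q using QuotientGroup.induction_on with
    | H g => exact hle (hgen ▸ mem_top g)
  exact (Group.isSolvable_iff_subgroup_quotient (closure s)).mpr
    ⟨Group.isSolvable_of_isMulCommutative, Group.isSolvable_of_isMulCommutative⟩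

theorem mul_pow_eq_one_comm {a b : G} {n : ℕ} (h : (a * b) ^ n = 1) : (b * a) ^ n = 1 := by
  rw [show b * a = b * (a * b) * b⁻¹ by group, conj_pow, h, mul_one, mul_inv_cancel]

theorem closure_pair_mul_inv (x z : G) : closure {x * z, z⁻¹} = closure {x, z} := by
  have hx : x ∈ closure {x, z} := subset_closure (by simp)
  have hz : z ∈ closure {x, z} := subset_closure (by simp)
  have hxz : x * z ∈ closure {x * z, z⁻¹} := subset_closure (by simp)
  have hz' : z⁻¹ ∈ closure {x * z, z⁻¹} := subset_closure (by simp)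
  apply le_antisymm <;> rw [closure_le, Set.insert_subset_iff, Set.singleton_subset_iff]
  · exact ⟨mul_mem hx hz, inv_mem hz⟩
  · exact ⟨by simpa using mul_mem hxz hz', by simpa using inv_mem hz'⟩

theorem inv_eq_self_of_pow_two_eq_one {x : G} (hx : x ^ 2 = 1) : x⁻¹ = x :=
  inv_eq_of_mul_eq_one_right ((pow_two x).symm.trans hx)

theorem inv_mul_inv_eq_of_pow_three_eq_one {x : G} (hx : x ^ 3 = 1) : x⁻¹ * x⁻¹ = x := by
  rw [← mul_inv_rev, inv_eq_iff_mul_eq_one, ← hx, pow_three]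
  group

theorem mul_mul_eq_inv_of_mul_pow_three_eq_one {x z : G} (hxz : (x * z) ^ 3 = 1) :
    x * z * x = (z * x * z)⁻¹ :=
  eq_inv_of_mul_eq_one_left (by rw [← hxz, pow_three]; group)

theorem isSolvable_of_pow_two_of_mul_pow_two {x z : G} (hgen : closure {x, z} = ⊤)
    (hx : x ^ 2 = 1) (hxz : (x * z) ^ 2 = 1) : Group.IsSolvable G := by
  have hconj : x * z * x⁻¹ = z⁻¹ := by
    rw [inv_eq_self_of_pow_two_eq_one hx]
    exact eq_inv_of_mul_eq_one_left (by rw [← hxz, pow_two]; group)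
  refine isSolvable_of_closure_insert_eq_top hgen (by simp) ?_
  refine mem_normalizer_closure_of_isOfFinOrder
    (isOfFinOrder_iff_pow_eq_one.mpr ⟨2, two_pos, hx⟩) ?_
  rintro _ rfl
  rw [hconj]
  exact inv_mem (mem_closure_singleton_self _)

theorem isSolvable_of_pow_two_of_pow_three_of_mul_pow_three {x z : G} (hgen : closure {x, z} = ⊤)
    (hx : x ^ 2 = 1) (hz : z ^ 3 = 1) (hxz : (x * z) ^ 3 = 1) : Group.IsSolvable G := by
  have hxinv := inv_eq_self_of_pow_two_eq_one hx
  have hzz := inv_mul_inv_eq_of_pow_three_eq_one hz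
  have hxq : x * (z * x * z⁻¹) = z⁻¹ * x * z := by
    calc x * (z * x * z⁻¹) = x * z * x * z⁻¹ := by group
      _ = z⁻¹ * x * (z⁻¹ * z⁻¹) := by
        rw [mul_mul_eq_inv_of_mul_pow_three_eq_one hxz]; simp only [mul_inv_rev, hxinv, mul_assoc]
      _ = z⁻¹ * x * z := by rw [hzz]
  have hcomm : x * (z * x * z⁻¹) = z * x * z⁻¹ * x := by
    calc x * (z * x * z⁻¹) = (x * (z * x * z⁻¹))⁻¹ := by
          rw [hxq]; simp only [mul_inv_rev, inv_inv, hxinv, mul_assoc]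
      _ = z * x * z⁻¹ * x := by simp only [mul_inv_rev, inv_inv, hxinv, mul_assoc]
  have hconj : z * (z * x * z⁻¹) * z⁻¹ = x * (z * x * z⁻¹) := by
    calc z * (z * x * z⁻¹) * z⁻¹ = (z⁻¹ * z⁻¹)⁻¹ * x * (z⁻¹ * z⁻¹) := by
          simp only [mul_inv_rev, inv_inv, mul_assoc]
      _ = x * (z * x * z⁻¹) := by rw [hzz, ← hxq]
  have hxmem : x ∈ closure {x, z * x * z⁻¹} := subset_closure (by simp)
  have hqmem : z * x * z⁻¹ ∈ closure {x, z * x * z⁻¹} := subset_closure (by simp)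
  refine isSolvable_of_closure_insert_eq_top (x := z) (s := {x, z * x * z⁻¹}) ?_ ?_ ?_
  · rw [eq_top_iff, ← hgen]
    exact closure_mono (Set.insert_subset (by simp) (by simp))
  · rintro _ (rfl | rfl) _ (rfl | rfl) <;> first | rfl | exact hcomm | exact hcomm.symm
  · refine mem_normalizer_closure_of_isOfFinOrder
      (isOfFinOrder_iff_pow_eq_one.mpr ⟨3, three_pos, hz⟩) ?_
    rintro _ (rfl | rfl)
    · exact hqmem
    · rw [hconj]; exact mul_mem hxmem hqmem

theorem isSolvable_of_pow_three_of_pow_three_of_mul_pow_three {x z : G}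
    (hgen : closure {x, z} = ⊤) (hx : x ^ 3 = 1) (hz : z ^ 3 = 1) (hxz : (x * z) ^ 3 = 1) :
    Group.IsSolvable G := by
  have hxx := inv_mul_inv_eq_of_pow_three_eq_one hx
  have hzz := inv_mul_inv_eq_of_pow_three_eq_one hz
  have hcomm : x⁻¹ * z * (z * x⁻¹) = z * x⁻¹ * (x⁻¹ * z) := by
    calc x⁻¹ * z * (z * x⁻¹) = x⁻¹ * (z⁻¹ * z⁻¹)⁻¹ * x⁻¹ := by
          simp only [mul_inv_rev, inv_inv, mul_assoc]
      _ = (x * z * x)⁻¹ := by simp only [hzz, mul_inv_rev, mul_assoc]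
      _ = z * x * z := by rw [mul_mul_eq_inv_of_mul_pow_three_eq_one (mul_pow_eq_one_comm hxz)]
      _ = z * (x⁻¹ * x⁻¹) * z := by rw [hxx]
      _ = z * x⁻¹ * (x⁻¹ * z) := by group
  have hconj : x * (z * x⁻¹) * x⁻¹ = (x⁻¹ * z * (z * x⁻¹))⁻¹ := by
    calc x * (z * x⁻¹) * x⁻¹ = x * z * (x⁻¹ * x⁻¹) := by group
      _ = x * (z⁻¹ * z⁻¹) * x := by rw [hxx, hzz]
      _ = (x⁻¹ * z * (z * x⁻¹))⁻¹ := by simp only [mul_inv_rev, inv_inv, mul_assoc]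
  have humem : x⁻¹ * z ∈ closure {x⁻¹ * z, z * x⁻¹} := subset_closure (by simp)
  have hvmem : z * x⁻¹ ∈ closure {x⁻¹ * z, z * x⁻¹} := subset_closure (by simp)
  refine isSolvable_of_closure_insert_eq_top (x := x) (s := {x⁻¹ * z, z * x⁻¹}) ?_ ?_ ?_
  · rw [eq_top_iff, ← hgen, closure_le, Set.insert_subset_iff, Set.singleton_subset_iff]
    have hxmem : x ∈ closure (insert x {x⁻¹ * z, z * x⁻¹}) := subset_closure (by simp)
    refine ⟨hxmem, ?_⟩
    simpa using mul_mem hxmem (closure_mono (Set.subset_insert _ _) humem)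
  · rintro _ (rfl | rfl) _ (rfl | rfl) <;> first | rfl | exact hcomm | exact hcomm.symm
  · refine mem_normalizer_closure_of_isOfFinOrder
      (isOfFinOrder_iff_pow_eq_one.mpr ⟨3, three_pos, hx⟩) ?_
    rintro _ (rfl | rfl)
    · rw [show x * (x⁻¹ * z) * x⁻¹ = z * x⁻¹ by group]; exact hvmem
    · rw [hconj]; exact inv_mem (mul_mem humem hvmem)

theorem pow_two_eq_one_or_pow_three_eq_one {g : G} (h0 : 0 < orderOf g) (h3 : orderOf g ≤ 3) :
    g ^ 2 = 1 ∨ g ^ 3 = 1 := by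
  rw [← orderOf_dvd_iff_pow_eq_one, ← orderOf_dvd_iff_pow_eq_one]
  interval_cases orderOf g <;> norm_num

end

theorem stmt_7 (G : Type*) [Group G] (x z : G)
    (hgen : Subgroup.closure {x, z} = ⊤)
    (hx0 : 0 < orderOf x) (hx : orderOf x ≤ 3)
    (hz0 : 0 < orderOf z) (hz : orderOf z ≤ 3)
    (hxz0 : 0 < orderOf (x * z)) (hxz : orderOf (x * z) ≤ 3) :
    IsSolvable G := by
  have hgen_swap : closure {z, x} = ⊤ := by rwa [Set.pair_comm]
  have hgen_mul_inv : closure {x * z, z⁻¹} = ⊤ := by rwa [closure_pair_mul_inv]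
  rcases pow_two_eq_one_or_pow_three_eq_one hx0 hx with hx | hx <;>
    rcases pow_two_eq_one_or_pow_three_eq_one hz0 hz with hz | hz <;>
    rcases pow_two_eq_one_or_pow_three_eq_one hxz0 hxz with hxz | hxz
  · exact isSolvable_of_pow_two_of_mul_pow_two hgen hx hxz
  · exact isSolvable_of_pow_two_of_mul_pow_two (by rwa [Set.pair_comm]) (by simpa)
      (mul_pow_eq_one_comm (by rwa [mul_inv_cancel_right]))
  · exact isSolvable_of_pow_two_of_mul_pow_two hgen hx hxz
  · exact isSolvable_of_pow_two_of_pow_three_of_mul_pow_three hgen hx hz hxz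
  · exact isSolvable_of_pow_two_of_mul_pow_two hgen_swap hz (mul_pow_eq_one_comm hxz)
  · exact isSolvable_of_pow_two_of_pow_three_of_mul_pow_three hgen_swap hz hx
      (mul_pow_eq_one_comm hxz)
  · exact isSolvable_of_pow_two_of_pow_three_of_mul_pow_three hgen_mul_inv hxz (by simpa)
      (by rwa [mul_inv_cancel_right])
  · exact isSolvable_of_pow_three_of_pow_three_of_mul_pow_three hgen hx hz hxz
end

section
/- Let G be a finite group generated by elements x and y, where x has order 2 and y has order at least 3. Then the Cayley digraph Cay(G,{x,y}) is a digraphical regular representation of G. -/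
/-!
An automorphism `σ` of `Cay(G, {x, y})` maps the arc `u → s u` to an arc `σ u → t σ u` with
`t ∈ {x, y}`, and it maps digons to digons. Since `x` is an involution while `y⁻¹ ∉ {x, y}`,
the `x`-arcs are exactly the arcs lying on a digon, so `σ` preserves arc colours:
`σ (s u) = s σ u` for `s ∈ {x, y}`. As `x` and `y` generate `G`, this gives
`σ (g u) = g σ u` for all `g`, hence `σ u = u σ 1`.
-/

section CayleyDigraph

variable {G : Type*} [Group G] {S : Set G} {σ : Equiv.Perm G}

theorem IsCayleyDigraphAut.map_mul_left_mul_inv_mem (hσ : IsCayleyDigraphAut S σ) {s : G}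
    (hs : s ∈ S) (u : G) : σ (s * u) * (σ u)⁻¹ ∈ S :=
  (hσ u (s * u)).mp (by rwa [mul_inv_cancel_right])

theorem IsCayleyDigraphAut.inv_map_mul_left_mul_inv_mem_iff (hσ : IsCayleyDigraphAut S σ)
    (s u : G) : (σ (s * u) * (σ u)⁻¹)⁻¹ ∈ S ↔ s⁻¹ ∈ S := by
  rw [mul_inv_rev, inv_inv, ← hσ (s * u) u, mul_inv_rev, mul_inv_cancel_left]

/-- `t⁻¹ ∈ S` says that the `t`-arcs lie on digons, which `σ` preserves. -/
theorem IsCayleyDigraphAut.map_mul_left (hσ : IsCayleyDigraphAut S σ) {s : G} (hs : s ∈ S)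
    (huniq : ∀ t ∈ S, (t⁻¹ ∈ S ↔ s⁻¹ ∈ S) → t = s) (u : G) : σ (s * u) = s * σ u :=
  mul_inv_eq_iff_eq_mul.mp <| huniq _ (hσ.map_mul_left_mul_inv_mem hs u)
    (hσ.inv_map_mul_left_mul_inv_mem_iff s u)

end CayleyDigraph

theorem eq_mul_apply_one_of_map_mul_left {G : Type*} [Group G] {S : Set G}
    (hS : Subgroup.closure S = ⊤) {f : G → G} (hf : ∀ s ∈ S, ∀ u, f (s * u) = s * f u)
    (u : G) : f u = u * f 1 := by
  suffices ∀ g, ∀ u, f (g * u) = g * f u by simpa using this u 1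
  intro g
  induction (hS ▸ Subgroup.mem_top g : g ∈ Subgroup.closure S) using
    Subgroup.closure_induction with
  | mem s hs => exact hf s hs
  | one => simp
  | mul a b _ _ ha hb => intro u; rw [mul_assoc, ha, hb, mul_assoc]
  | inv a _ ha => intro u; rw [eq_inv_mul_iff_mul_eq, ← ha, mul_inv_cancel_left]

theorem inv_notMem_pair_of_orderOf {G : Type*} [Group G] {x y : G} (hx : orderOf x = 2)
    (hy : 3 ≤ orderOf y) : y⁻¹ ∉ ({x, y} : Set G) := by
  rintro (h | h)
  · rw [← orderOf_inv, h, hx] at hy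
    omega
  · have : orderOf y ≤ 2 :=
      orderOf_le_of_pow_eq_one two_pos (by rw [sq, mul_eq_one_iff_eq_inv, h])
    omega

theorem stmt_9_general (G : Type*) [Group G] (x y : G)
    (hgen : Subgroup.closure {x, y} = ⊤)
    (hx : orderOf x = 2) (hy : 3 ≤ orderOf y) :
    IsDRR ({x, y} : Set G) := by
  intro σ hσ
  have hxinv : x⁻¹ = x := inv_eq_self_of_orderOf_eq_two hx
  have hyinv : y⁻¹ ∉ ({x, y} : Set G) := inv_notMem_pair_of_orderOf hx hy
  have hcolour : ∀ s ∈ ({x, y} : Set G), ∀ u, σ (s * u) = s * σ u := by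
    rintro s (rfl | rfl)
    · refine hσ.map_mul_left (by simp) ?_
      rintro t (rfl | rfl) ht
      · rfl
      · exact absurd (ht.mpr (by simp [hxinv])) hyinv
    · refine hσ.map_mul_left (by simp) ?_
      rintro t (rfl | rfl) ht
      · exact absurd (ht.mp (by simp [hxinv])) hyinv
      · rfl
  exact ⟨σ 1, eq_mul_apply_one_of_map_mul_left hgen hcolour⟩

theorem stmt_9 (G : Type*) [Group G] [Finite G] (x y : G)
    (hgen : Subgroup.closure {x, y} = ⊤)
    (hx : orderOf x = 2) (hy : 3 ≤ orderOf y) :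
    IsDRR ({x, y} : Set G) :=
  stmt_9_general G x y hgen hx hy
end

section
/- Let G be a group and let x, y ∈ G be such that x has order 4, y has order at least 5, the order of x·y is at least 3, and it is not the case that y has order 12 with x = y⁹. Then for any s₁, s₂, s₃, s₄ ∈ {x, y}, if s₁·s₂·s₃·s₄ = 1 then s₁ = s₂ = s₃ = s₄ = x. -/
/-! A relation `s₁ s₂ s₃ s₄ = 1` survives cyclic rotation, so up to rotation it is one of
`x⁴`, `x³y`, `x²y²`, `xyxy`, `xy³`, `y⁴`. The words `y⁴` and `xyxy` contradict the bounds on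
the orders of `y` and `xy` directly; `x³y = 1` forces `y = x`, and `x²y² = 1` forces `y⁴ = 1`.
Finally `xy³ = 1` makes `x = y⁻³` of order `ord y / gcd(ord y, 3) = 4`, so `ord y` is `4` or
`12`, and in the latter case `y⁻³ = y⁹`. -/

section

variable {G : Type*} [Group G]

theorem mul_mul_mul_eq_one_rotate {a b c d : G} (h : a * b * c * d = 1) : b * c * d * a = 1 := by
  rw [mul_assoc, mul_assoc] at h
  simpa only [mul_assoc] using mul_eq_one_comm.mp h

theorem eq_of_pow_four_eq_one_of_mul_mul_mul_eq_one {x y : G} (hx : x ^ 4 = 1)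
    (h : x * x * x * y = 1) : y = x :=
  mul_left_cancel (a := x * x * x) (h.trans (by rw [← hx, pow_succ, pow_succ, pow_succ, pow_one]))

theorem pow_four_eq_one_of_mul_mul_mul_eq_one {x y : G} (hx : x ^ 4 = 1)
    (h : x * x * y * y = 1) : y ^ 4 = 1 := by
  have hyy : y * y = (x * x)⁻¹ := eq_inv_of_mul_eq_one_right (by simpa only [mul_assoc] using h)
  calc y ^ 4 = (y * y) * (y * y) := by
        simp only [pow_succ, pow_zero, one_mul, mul_assoc]
    _ = (x ^ 4)⁻¹ := by rw [hyy]; group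
    _ = 1 := by rw [hx, inv_one]

theorem orderOf_eq_four_or_of_mul_mul_mul_eq_one {x y : G} (hx : orderOf x = 4)
    (h : x * y * y * y = 1) : orderOf y = 4 ∨ (orderOf y = 12 ∧ x = y ^ 9) := by
  have hxy : x = (y ^ 3)⁻¹ :=
    eq_inv_of_mul_eq_one_left (by rw [← h, pow_succ, pow_two]; simp only [mul_assoc])
  have hdiv : orderOf y / Nat.gcd (orderOf y) 3 = 4 := by
    rw [← orderOf_pow' y three_ne_zero, ← orderOf_inv, ← hxy, hx]
  have hmul := Nat.div_mul_cancel (Nat.gcd_dvd_left (orderOf y) 3)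
  rw [hdiv] at hmul
  rcases Nat.prime_three.eq_one_or_self_of_dvd _ (Nat.gcd_dvd_right (orderOf y) 3) with h1 | h3
  · left; omega
  · have hy12 : orderOf y = 12 := by omega
    refine Or.inr ⟨hy12, hxy.trans (inv_eq_of_mul_eq_one_left ?_)⟩
    rw [← pow_add, show 9 + 3 = orderOf y by omega, pow_orderOf_eq_one]

end

theorem stmt_13 (G : Type*) [Group G] (x y : G)
    (hx : orderOf x = 4) (hy : 5 ≤ orderOf y) (hxy : 3 ≤ orderOf (x * y))
    (hexc : ¬ (orderOf y = 12 ∧ x = y ^ 9)) :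
    ∀ s₁ s₂ s₃ s₄ : G, s₁ ∈ ({x, y} : Set G) → s₂ ∈ ({x, y} : Set G) →
      s₃ ∈ ({x, y} : Set G) → s₄ ∈ ({x, y} : Set G) → s₁ * s₂ * s₃ * s₄ = 1 →
      s₁ = x ∧ s₂ = x ∧ s₃ = x ∧ s₄ = x := by
  have hx4 : x ^ 4 = 1 := hx ▸ pow_orderOf_eq_one x
  have hyyyy : y * y * y * y ≠ 1 := by
    simpa only [pow_succ, pow_zero, one_mul] using pow_ne_one_of_lt_orderOf four_ne_zero hy
  have hxyxy : x * y * x * y ≠ 1 := by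
    simpa only [pow_two, ← mul_assoc] using pow_ne_one_of_lt_orderOf two_ne_zero hxy
  have hxxxy : x * x * x * y ≠ 1 := fun h => by
    have := eq_of_pow_four_eq_one_of_mul_mul_mul_eq_one hx4 h ▸ hy
    omega
  have hxxyy : x * x * y * y ≠ 1 := fun h =>
    pow_ne_one_of_lt_orderOf four_ne_zero hy (pow_four_eq_one_of_mul_mul_mul_eq_one hx4 h)
  have hxyyy : x * y * y * y ≠ 1 := fun h => by
    rcases orderOf_eq_four_or_of_mul_mul_mul_eq_one hx h with h4 | h12
    · omega
    · exact hexc h12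
  intro s₁ s₂ s₃ s₄ h₁ h₂ h₃ h₄ h
  have r₂ := mul_mul_mul_eq_one_rotate h
  have r₃ := mul_mul_mul_eq_one_rotate r₂
  have r₄ := mul_mul_mul_eq_one_rotate r₃
  simp only [Set.mem_insert_iff, Set.mem_singleton_iff] at h₁ h₂ h₃ h₄
  rcases h₁ with rfl | rfl <;> rcases h₂ with rfl | rfl <;> rcases h₃ with rfl | rfl <;>
    rcases h₄ with rfl | rfl <;> tauto
end
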